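/- C3*, the graph consisting of a triangle with one pendant edge, is the unique nontrivial uniquely C4+-saturated graph containing exactly one triangle. -/

import Mathlib

open SimpleGraph

/-- The diamond graph `C₄⁺`: a `4`-cycle with one chord, i.e. `K₄` minus an edge. -/
def diamond : SimpleGraph (Fin 4) := (⊤ : SimpleGraph (Fin 4)).deleteEdges {s(0, 1)}

/-- `G'` is a copy of `H` in `G`, i.e. a subgraph of `G` isomorphic to `H`. -/
def IsCopy {W V : Type*} (H : SimpleGraph W) {G : SimpleGraph V} (G' : G.Subgraph) : Prop :=
  Nonempty (G'.coe ≃g H)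

/-- `G` is uniquely `H`-saturated: `G` is `H`-free, and adding any non-edge
creates exactly one copy of `H`. -/
def UniquelySaturated {W V : Type*} (H : SimpleGraph W) (G : SimpleGraph V) : Prop :=
  (∀ G' : G.Subgraph, ¬ IsCopy H G') ∧
    ∀ u v : V, u ≠ v → ¬ G.Adj u v →
      ∃! G' : (G ⊔ SimpleGraph.fromEdgeSet {s(u, v)}).Subgraph, IsCopy H G'

/-- `C₃*`: a triangle with one pendant edge. -/
def C3star : SimpleGraph (Fin 4) :=
  SimpleGraph.fromEdgeSet {s(0, 1), s(0, 2), s(1, 2), s(2, 3)}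

/-!
Adding a non-edge `uv` to a diamond-free graph creates a diamond in which `uv` is either the
chord, so that `u` and `v` have two common neighbours, or a side, so that one of `u, v` lies on a
triangle through a neighbour of the other. Uniqueness of that diamond means that non-adjacent
vertices have at most two common neighbours.

Let `T` be the unique triangle. A vertex outside `T` adjacent to `t ∈ T` has no other neighbour in
`T`, and by uniqueness (add its edge to a second vertex of `T`) all its neighbours other than `t`
are detached: outside `T` and without neighbours in `T`. If there are detached vertices, double
counting the paths through them gives `|A t'| + 1 = |A t|` for the sets `A t` of vertices outside
`T` attached to `t`, for any two distinct `t, t' ∈ T`, which is absurd. Otherwise every vertex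
outside `T` has degree one, while two such vertices would have two common neighbours; so there is
exactly one of them and `G ≅ C₃*`.
-/

instance : DecidableRel diamond.Adj :=
  inferInstanceAs (DecidableRel ((⊤ : SimpleGraph (Fin 4)).deleteEdges {s(0, 1)}).Adj)

instance : DecidableRel C3star.Adj :=
  inferInstanceAs
    (DecidableRel (fromEdgeSet {s(0, 1), s(0, 2), s(1, 2), s(2, 3)} : SimpleGraph (Fin 4)).Adj)

open Finset

namespace SimpleGraph

variable {V W : Type*} {G K : SimpleGraph V} {H : SimpleGraph W}

theorem isCopy_iff_exists_copy {G' : K.Subgraph} :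
    IsCopy H G' ↔ ∃ f : Copy H K, f.toSubgraph = G' := by
  rw [← Set.mem_range, Copy.range_toSubgraph, Set.mem_ofPred_eq, IsCopy]
  exact ⟨fun ⟨e⟩ => ⟨e.symm⟩, fun ⟨e⟩ => ⟨e.symm⟩⟩

theorem forall_not_isCopy_iff_free : (∀ G' : G.Subgraph, ¬ IsCopy H G') ↔ H.Free G := by
  simp only [isCopy_iff_exists_copy, not_exists, Free, IsContained, not_nonempty_iff]
  exact ⟨fun h => ⟨fun f => h _ f rfl⟩, fun ⟨h⟩ _ f _ => h f⟩

theorem Copy.range_eq_of_existsUnique (hK : ∃! G' : K.Subgraph, IsCopy H G') (f g : Copy H K) :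
    Set.range f = Set.range g := by
  have hfg :=
    hK.unique (isCopy_iff_exists_copy.mpr ⟨f, rfl⟩) (isCopy_iff_exists_copy.mpr ⟨g, rfl⟩)
  simpa [Copy.toSubgraph, Set.image_univ] using congrArg Subgraph.verts hfg

/-- `H.map f ≤ K` has as many edges as `K`, hence is `K`. -/
theorem Copy.toSubgraph_eq_top_of_iso [Fintype V] [Fintype W] (e : K ≃g H) (f : Copy H K) :
    f.toSubgraph = ⊤ := by
  classical
  have hbij : Function.Bijective f :=
    (Fintype.bijective_iff_injective_and_card f).mpr
      ⟨f.injective, (Fintype.card_congr e.toEquiv).symm⟩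
  have hle : H.map f ≤ K := by
    rintro _ _ ⟨-, a, b, hab, rfl, rfl⟩
    exact f.toHom.map_adj hab
  have hmap : H.map f = K := by
    refine edgeFinset_inj.mp (Finset.eq_of_subset_of_card_le (edgeFinset_mono hle) (le_of_eq ?_))
    calc #K.edgeFinset = #H.edgeFinset := e.card_edgeFinset_eq
      _ = #(H.map f).edgeFinset := by
        convert (Iso.map (.ofBijective f hbij) H).card_edgeFinset_eq; rfl
  ext x y
  · simpa using hbij.2 x
  · have hK : K.Adj x y ↔ x ≠ y ∧ Relation.Map H.Adj f f x y := by
      rw [← congrArg Adj hmap]; rfl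
    simp only [Subgraph.map_adj, Subgraph.top_adj, hK, Copy.coe_toHom]
    refine ⟨fun h => ⟨?_, h⟩, And.right⟩
    obtain ⟨a, b, hab, rfl, rfl⟩ := h
    exact f.injective.ne hab.ne

theorem existsUnique_isCopy_of_iso [Fintype V] [Fintype W] (e : K ≃g H) :
    ∃! G' : K.Subgraph, IsCopy H G' := by
  refine ⟨⊤, ⟨Subgraph.topIso.trans e⟩, fun G' hG' => ?_⟩
  obtain ⟨f, rfl⟩ := isCopy_iff_exists_copy.mp hG'
  exact f.toSubgraph_eq_top_of_iso e

section UniquelySaturated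

variable {u v : V}

theorem UniquelySaturated.free (hG : UniquelySaturated H G) : H.Free G :=
  forall_not_isCopy_iff_free.mp hG.1

theorem UniquelySaturated.isContained_sup_edge (hG : UniquelySaturated H G) (huv : u ≠ v)
    (hadj : ¬ G.Adj u v) : H ⊑ G ⊔ edge u v := by
  obtain ⟨G', hG', -⟩ := hG.2 u v huv hadj
  exact ⟨(isCopy_iff_exists_copy.mp hG').choose⟩

theorem UniquelySaturated.range_eq (hG : UniquelySaturated H G) (huv : u ≠ v)
    (hadj : ¬ G.Adj u v) (f g : Copy H (G ⊔ edge u v)) : Set.range f = Set.range g :=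
  Copy.range_eq_of_existsUnique (hG.2 u v huv hadj) f g

end UniquelySaturated

section Diamond

variable {u v p q r s : V}

/-- The diamond on `p q r s` with chord (spine) `r s` and tips `p q`. -/
structure SpansDiamond (G : SimpleGraph V) (p q r s : V) : Prop where
  ne : p ≠ q
  adj_pr : G.Adj p r
  adj_ps : G.Adj p s
  adj_qr : G.Adj q r
  adj_qs : G.Adj q s
  adj_rs : G.Adj r s

namespace SpansDiamond

theorem swap_tips (h : SpansDiamond G p q r s) : SpansDiamond G q p r s :=
  ⟨h.ne.symm, h.adj_qr, h.adj_qs, h.adj_pr, h.adj_ps, h.adj_rs⟩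

theorem swap_spine (h : SpansDiamond G p q r s) : SpansDiamond G p q s r :=
  ⟨h.ne, h.adj_ps, h.adj_pr, h.adj_qs, h.adj_qr, h.adj_rs.symm⟩

def copy (h : SpansDiamond G p q r s) : Copy diamond G where
  toHom := ⟨![p, q, r, s], fun {i j} hij => by
    fin_cases i <;> fin_cases j <;> first
      | exact absurd hij (by decide)
      | simp [h.adj_pr, h.adj_ps, h.adj_qr, h.adj_qs, h.adj_rs, h.adj_pr.symm, h.adj_ps.symm,
          h.adj_qr.symm, h.adj_qs.symm, h.adj_rs.symm]⟩
  injective' := by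
    rw [← List.nodup_ofFn]
    simp [h.ne, h.adj_pr.ne, h.adj_ps.ne, h.adj_qr.ne, h.adj_qs.ne, h.adj_rs.ne]

theorem range_copy (h : SpansDiamond G p q r s) : Set.range h.copy = {p, q, r, s} := by
  change Set.range ![p, q, r, s] = _
  simp only [Matrix.range_cons, Matrix.range_empty, Set.union_empty, Set.singleton_union]

end SpansDiamond

theorem diamond_isContained_iff : diamond ⊑ G ↔ ∃ p q r s, SpansDiamond G p q r s := by
  refine ⟨fun ⟨f⟩ => ⟨f 0, f 1, f 2, f 3, ?_⟩, fun ⟨p, q, r, s, h⟩ => ⟨h.copy⟩⟩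
  exact ⟨f.injective.ne (by decide), f.toHom.map_adj (by decide), f.toHom.map_adj (by decide),
    f.toHom.map_adj (by decide), f.toHom.map_adj (by decide), f.toHom.map_adj (by decide)⟩

theorem adj_sup_edge (huv : u ≠ v) : (G ⊔ edge u v).Adj u v :=
  Or.inr ((edge_adj ..).mpr ⟨Or.inl ⟨rfl, rfl⟩, huv⟩)

theorem Adj.of_sup_edge (h : (G ⊔ edge u v).Adj p q) : G.Adj p q ∨ s(p, q) = s(u, v) :=
  h.imp_right fun h => Sym2.eq_iff.mpr ((edge_adj ..).mp h).1

theorem SpansDiamond.sup_edge_of_mem_commonNeighbors (hpq : p ≠ q)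
    (hp : p ∈ G.commonNeighbors u v) (hq : q ∈ G.commonNeighbors u v) (huv : u ≠ v) :
    SpansDiamond (G ⊔ edge u v) p q u v :=
  ⟨hpq, Or.inl hp.1.symm, Or.inl hp.2.symm, Or.inl hq.1.symm, Or.inl hq.2.symm,
    adj_sup_edge huv⟩

theorem SpansDiamond.exists_isNClique_of_sup_edge [DecidableEq V]
    (h : SpansDiamond (G ⊔ edge u v) p q r s) (hpr : ¬ G.Adj p r) :
    (∃ x y, G.IsNClique 3 {v, x, y} ∧ G.Adj u y) ∨
      (∃ x y, G.IsNClique 3 {u, x, y} ∧ G.Adj v y) := by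
  have huv : s(p, r) = s(u, v) := h.adj_pr.of_sup_edge.resolve_left hpr
  have lift : ∀ {x y}, (G ⊔ edge u v).Adj x y → ¬ s(x, y) = s(p, r) → G.Adj x y :=
    fun hxy hne => hxy.of_sup_edge.resolve_right (huv ▸ hne)
  -- The other four pairs of the diamond differ from `{p, r} = {u, v}`, so they are edges of `G`.
  have := h.ne; have := h.adj_pr.ne; have := h.adj_ps.ne; have := h.adj_qr.ne
  have := h.adj_qs.ne; have := h.adj_rs.ne
  have hps := lift h.adj_ps (by grind)
  have hqr := lift h.adj_qr (by grind)
  have hqs := lift h.adj_qs (by grind)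
  have hrs := lift h.adj_rs (by grind)
  have hqrs : G.IsNClique 3 {r, q, s} := is3Clique_triple_iff.mpr ⟨hqr.symm, hrs, hqs⟩
  rcases Sym2.eq_iff.mp huv with ⟨rfl, rfl⟩ | ⟨rfl, rfl⟩
  · exact Or.inl ⟨q, s, hqrs, hps⟩
  · exact Or.inr ⟨q, s, hqrs, hps⟩

theorem exists_of_diamond_isContained_sup_edge [DecidableEq V] (hfree : diamond.Free G)
    (h : diamond ⊑ G ⊔ edge u v) :
    (∃ x y, x ≠ y ∧ x ∈ G.commonNeighbors u v ∧ y ∈ G.commonNeighbors u v) ∨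
      (∃ x y, G.IsNClique 3 {v, x, y} ∧ G.Adj u y) ∨
      (∃ x y, G.IsNClique 3 {u, x, y} ∧ G.Adj v y) := by
  obtain ⟨p, q, r, s, h⟩ := diamond_isContained_iff.mp h
  by_cases hpr : G.Adj p r; swap
  · exact Or.inr (h.exists_isNClique_of_sup_edge hpr)
  by_cases hps : G.Adj p s; swap
  · exact Or.inr (h.swap_spine.exists_isNClique_of_sup_edge hps)
  by_cases hqr : G.Adj q r; swap
  · exact Or.inr (h.swap_tips.exists_isNClique_of_sup_edge hqr)
  by_cases hqs : G.Adj q s; swap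
  · exact Or.inr (h.swap_tips.swap_spine.exists_isNClique_of_sup_edge hqs)
  rcases h.adj_rs.of_sup_edge with hrs | hrs
  · exact (hfree <| diamond_isContained_iff.mpr
      ⟨p, q, r, s, h.ne, hpr, hps, hqr, hqs, hrs⟩).elim
  · refine Or.inl ⟨p, q, h.ne, ?_⟩
    rcases Sym2.eq_iff.mp hrs with ⟨rfl, rfl⟩ | ⟨rfl, rfl⟩
    · exact ⟨⟨hpr.symm, hps.symm⟩, ⟨hqr.symm, hqs.symm⟩⟩
    · exact ⟨⟨hps.symm, hpr.symm⟩, ⟨hqs.symm, hqr.symm⟩⟩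

end Diamond

theorem adj_and_adj_iff_of_commonNeighbors_eq_pair {u v x y z : V}
    (h : G.commonNeighbors u v = {x, y}) : G.Adj u z ∧ G.Adj v z ↔ z = x ∨ z = y := by
  rw [← mem_commonNeighbors, h, Set.mem_insert_iff, Set.mem_singleton_iff]

namespace UniquelySaturated

variable {u v w x y z a b c : V}

theorem eq_or_eq_of_mem_commonNeighbors (hG : UniquelySaturated diamond G) (huv : u ≠ v)
    (hadj : ¬ G.Adj u v) (hxy : x ≠ y) (hx : x ∈ G.commonNeighbors u v)
    (hy : y ∈ G.commonNeighbors u v) (hz : z ∈ G.commonNeighbors u v) : z = x ∨ z = y := by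
  by_contra! hzxy
  have hxz := SpansDiamond.sup_edge_of_mem_commonNeighbors (Ne.symm hzxy.1) hx hz huv
  have hxy := SpansDiamond.sup_edge_of_mem_commonNeighbors hxy hx hy huv
  have hzxyuv : z ∈ ({x, y, u, v} : Set V) := by
    rw [← hxy.range_copy, hG.range_eq huv hadj hxy.copy hxz.copy, hxz.range_copy]
    simp
  rcases hzxyuv with h | h | h | h
  exacts [hzxy.1 h, hzxy.2 h, hz.1.ne' h, hz.2.ne' h]

/-- Adding `vb` creates the diamond `vcab`, and also `awvb` if `w ≠ a`. -/
theorem eq_of_mem_commonNeighbors (hG : UniquelySaturated diamond G) (hab : G.Adj a b)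
    (hac : G.Adj a c) (hbc : G.Adj b c) (hva : G.Adj v a) (hvb : ¬ G.Adj v b) (hvc : ¬ G.Adj v c)
    (hw : w ∈ G.commonNeighbors v b) : w = a := by
  obtain ⟨hvw, hbw⟩ := hw
  have hwb := hbw.symm
  by_contra hwa
  have hvb' : v ≠ b := by rintro rfl; exact hvc hbc
  have hvc' : v ≠ c := by rintro rfl; exact hvb hbc.symm
  have hvcab : SpansDiamond (G ⊔ edge v b) v c a b :=
    ⟨hvc', Or.inl hva, adj_sup_edge hvb', Or.inl hac.symm, Or.inl hbc.symm, Or.inl hab⟩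
  have hawvb : SpansDiamond (G ⊔ edge v b) a w v b :=
    ⟨Ne.symm hwa, Or.inl hva.symm, Or.inl hab, Or.inl hvw.symm, Or.inl hwb, adj_sup_edge hvb'⟩
  have hc : c ∈ ({a, w, v, b} : Set V) := by
    rw [← hawvb.range_copy, ← hG.range_eq hvb' hvb hvcab.copy hawvb.copy, hvcab.range_copy]
    simp
  rcases hc with rfl | rfl | rfl | rfl
  exacts [hac.ne rfl, hvc hvw, hvc' rfl, hbc.ne rfl]

theorem exists_commonNeighbors_eq_pair [DecidableEq V] (hG : UniquelySaturated diamond G)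
    (huv : u ≠ v) (hadj : ¬ G.Adj u v)
    (hu : ∀ x y, G.IsNClique 3 {v, x, y} → ¬ G.Adj u y)
    (hv : ∀ x y, G.IsNClique 3 {u, x, y} → ¬ G.Adj v y) :
    ∃ x y, x ≠ y ∧ G.commonNeighbors u v = {x, y} := by
  rcases exists_of_diamond_isContained_sup_edge hG.free (hG.isContained_sup_edge huv hadj) with
    ⟨x, y, hxy, hx, hy⟩ | ⟨x, y, hvxy, huy⟩ | ⟨x, y, huxy, hvy⟩
  · refine ⟨x, y, hxy, Set.Subset.antisymm (fun z hz => ?_) ?_⟩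
    · exact hG.eq_or_eq_of_mem_commonNeighbors huv hadj hxy hx hy hz
    · exact Set.insert_subset_iff.mpr ⟨hx, Set.singleton_subset_iff.mpr hy⟩
  · exact (hu x y hvxy huy).elim
  · exact (hv x y huxy hvy).elim

end UniquelySaturated

section UniqueTriangle

variable {T : Finset V} {t t' u v w x y z : V}

def IsDetached (G : SimpleGraph V) (T : Finset V) (x : V) : Prop :=
  x ∉ T ∧ ∀ t ∈ T, ¬ G.Adj x t

theorem eq_of_isNClique_three (hT : G.cliqueSet 3 = {T}) {S : Finset V} (hS : G.IsNClique 3 S) :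
    S = T := by
  simpa [hT] using (mem_cliqueSet_iff.mpr hS : S ∈ G.cliqueSet 3)

theorem isNClique_of_cliqueSet_eq (hT : G.cliqueSet 3 = {T}) : G.IsNClique 3 T :=
  mem_cliqueSet_iff.mp (hT ▸ Set.mem_singleton T)

theorem adj_of_mem_of_mem (hT : G.cliqueSet 3 = {T}) (ht : t ∈ T) (ht' : t' ∈ T)
    (htt' : t ≠ t') : G.Adj t t' :=
  (isNClique_of_cliqueSet_eq hT).1 ht ht' htt'

variable [DecidableEq V]

theorem mem_of_adj_of_adj_of_adj (hT : G.cliqueSet 3 = {T}) (hxy : G.Adj x y) (hxz : G.Adj x z)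
    (hyz : G.Adj y z) : x ∈ T := by
  rw [← eq_of_isNClique_three hT (is3Clique_triple_iff.mpr ⟨hxy, hxz, hyz⟩)]
  simp

theorem exists_mem_ne_ne (hT : G.cliqueSet 3 = {T}) (ht : t ∈ T) (t' : V) :
    ∃ r ∈ T, r ≠ t ∧ r ≠ t' := by
  have hcard := (isNClique_of_cliqueSet_eq hT).2
  obtain ⟨r, hr, hrt'⟩ :=
    exists_mem_ne (s := T.erase t) (by rw [card_erase_of_mem ht]; omega) t'
  exact ⟨r, mem_of_mem_erase hr, ne_of_mem_erase hr, hrt'⟩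

theorem not_adj_of_adj_of_notMem (hT : G.cliqueSet 3 = {T}) (hx : x ∉ T) (ht : t ∈ T)
    (ht' : t' ∈ T) (htt' : t ≠ t') (hxt : G.Adj x t) : ¬ G.Adj x t' :=
  fun hxt' => hx (mem_of_adj_of_adj_of_adj hT hxt hxt' (adj_of_mem_of_mem hT ht ht' htt'))

theorem UniquelySaturated.isDetached_of_adj_of_adj (hG : UniquelySaturated diamond G)
    (hT : G.cliqueSet 3 = {T}) (hx : x ∉ T) (ht : t ∈ T) (hxt : G.Adj x t) (hxw : G.Adj x w)
    (hwt : w ≠ t) : G.IsDetached T w := by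
  refine ⟨fun hw => not_adj_of_adj_of_notMem hT hx ht hw (Ne.symm hwt) hxt hxw,
    fun s hs hws => ?_⟩
  obtain rfl | hst := eq_or_ne s t
  · exact hx (mem_of_adj_of_adj_of_adj hT hxw hxt hws)
  obtain ⟨r, hr, hrs, hrt⟩ := exists_mem_ne_ne hT hs t
  exact hwt (hG.eq_of_mem_commonNeighbors (adj_of_mem_of_mem hT ht hs hst.symm)
    (adj_of_mem_of_mem hT ht hr hrt.symm) (adj_of_mem_of_mem hT hs hr hrs.symm) hxt
    (not_adj_of_adj_of_notMem hT hx ht hs hst.symm hxt)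
    (not_adj_of_adj_of_notMem hT hx ht hr hrt.symm hxt) ⟨hxw, hws.symm⟩)

theorem UniquelySaturated.exists_commonNeighbors_eq_pair_of_notMem
    (hG : UniquelySaturated diamond G) (hT : G.cliqueSet 3 = {T}) (huv : u ≠ v)
    (hadj : ¬ G.Adj u v) (hu : u ∉ T) (hv : v ∉ T ∨ G.IsDetached T u) :
    ∃ x y, x ≠ y ∧ G.commonNeighbors u v = {x, y} := by
  refine hG.exists_commonNeighbors_eq_pair huv hadj (fun x y hvxy huy => ?_)
    (fun x y huxy _ => hu (eq_of_isNClique_three hT huxy ▸ by simp))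
  have hvxy := eq_of_isNClique_three hT hvxy
  rcases hv with hv | hv
  · exact hv (hvxy ▸ by simp)
  · exact hv.2 y (hvxy ▸ by simp) huy

end UniqueTriangle

section Counting

variable [Fintype V] [DecidableEq V] [DecidableRel G.Adj] {T : Finset V} {t t' u u' w : V}

variable (G) in
def attached (T : Finset V) (t : V) : Finset V := {x | x ∉ T ∧ G.Adj x t}

variable (G) in
def detached (T : Finset V) : Finset V := {x | x ∉ T ∧ ∀ t ∈ T, ¬ G.Adj x t}

theorem mem_attached : u ∈ G.attached T t ↔ u ∉ T ∧ G.Adj u t := by simp [attached]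

theorem mem_detached : u ∈ G.detached T ↔ G.IsDetached T u := by simp [detached, IsDetached]

namespace UniquelySaturated

theorem card_filter_attached_adj (hG : UniquelySaturated diamond G) (hT : G.cliqueSet 3 = {T})
    (hw : w ∈ G.detached T) (ht : t ∈ T) : #{x ∈ G.attached T t | G.Adj w x} = 2 := by
  obtain ⟨hwT, hwt⟩ := mem_detached.mp hw
  obtain ⟨x, y, hxy, hN⟩ := hG.exists_commonNeighbors_eq_pair_of_notMem hT
    (by rintro rfl; exact hwT ht) (hwt t ht) hwT (Or.inr ⟨hwT, hwt⟩)
  convert card_pair hxy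
  ext z
  have hz : G.Adj w z ∧ G.Adj t z ↔ z = x ∨ z = y :=
    adj_and_adj_iff_of_commonNeighbors_eq_pair hN
  simp only [mem_filter, mem_attached, mem_insert, mem_singleton, ← hz]
  exact ⟨fun ⟨⟨_, hzt⟩, hwz⟩ => ⟨hwz, hzt.symm⟩,
    fun ⟨hwz, htz⟩ => ⟨⟨fun hz => hwt z hz hwz, htz.symm⟩, hwz⟩⟩

theorem card_filter_detached_adj_adj_of_attached (hG : UniquelySaturated diamond G)
    (hT : G.cliqueSet 3 = {T}) (ht : t ∈ T) (hu : u ∈ G.attached T t)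
    (hu' : u' ∈ G.attached T t) (huu' : u ≠ u') :
    #{w ∈ G.detached T | G.Adj w u ∧ G.Adj w u'} = 1 := by
  obtain ⟨huT, hut⟩ := mem_attached.mp hu
  obtain ⟨hu'T, hu't⟩ := mem_attached.mp hu'
  have hadj : ¬ G.Adj u u' := fun h => huT (mem_of_adj_of_adj_of_adj hT h hut hu't)
  obtain ⟨x, y, hxy, hN⟩ :=
    hG.exists_commonNeighbors_eq_pair_of_notMem hT huu' hadj huT (Or.inl hu'T)
  have hN z : G.Adj u z ∧ G.Adj u' z ↔ z = x ∨ z = y :=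
    adj_and_adj_iff_of_commonNeighbors_eq_pair hN
  obtain ⟨z, hzt, hz⟩ :
      ∃ z, z ≠ t ∧ ∀ w, G.Adj u w ∧ G.Adj u' w ↔ w = t ∨ w = z := by
    rcases (hN t).mp ⟨hut, hu't⟩ with rfl | rfl
    · exact ⟨y, hxy.symm, hN⟩
    · exact ⟨x, hxy, fun w => (hN w).trans or_comm⟩
  rw [card_eq_one]
  refine ⟨z, ext fun w => ?_⟩
  simp only [mem_filter, mem_detached, mem_singleton]
  constructor
  · rintro ⟨hwd, hwu, hwu'⟩
    exact ((hz w).mp ⟨hwu.symm, hwu'.symm⟩).resolve_left (by rintro rfl; exact hwd.1 ht)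
  · rintro rfl
    obtain ⟨huw, hu'w⟩ := (hz w).mpr (Or.inr rfl)
    exact ⟨hG.isDetached_of_adj_of_adj hT huT ht hut huw hzt, huw.symm, hu'w.symm⟩

theorem card_filter_detached_adj_adj_of_attached_of_attached (hG : UniquelySaturated diamond G)
    (hT : G.cliqueSet 3 = {T}) (ht : t ∈ T) (ht' : t' ∈ T) (htt' : t ≠ t')
    (hu : u ∈ G.attached T t) (hu' : u' ∈ G.attached T t') :
    #{w ∈ G.detached T | G.Adj w u ∧ G.Adj w u'} = 2 := by
  obtain ⟨huT, hut⟩ := mem_attached.mp hu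
  obtain ⟨hu'T, hu't'⟩ := mem_attached.mp hu'
  have hu't : ¬ G.Adj u' t := not_adj_of_adj_of_notMem hT hu'T ht' ht htt'.symm hu't'
  have huu' : u ≠ u' := by rintro rfl; exact hu't hut
  have hadj : ¬ G.Adj u u' := fun h =>
    (hG.isDetached_of_adj_of_adj hT huT ht hut h (fun h => hu'T (h ▸ ht))).2 t' ht' hu't'
  obtain ⟨x, y, hxy, hN⟩ :=
    hG.exists_commonNeighbors_eq_pair_of_notMem hT huu' hadj huT (Or.inl hu'T)
  convert card_pair hxy
  ext w
  have hw : G.Adj u w ∧ G.Adj u' w ↔ w = x ∨ w = y :=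
    adj_and_adj_iff_of_commonNeighbors_eq_pair hN
  simp only [mem_filter, mem_detached, mem_insert, mem_singleton, ← hw]
  refine ⟨fun ⟨_, hwu, hwu'⟩ => ⟨hwu.symm, hwu'.symm⟩, fun ⟨huw, hu'w⟩ => ?_⟩
  refine ⟨hG.isDetached_of_adj_of_adj hT huT ht hut huw ?_, huw.symm, hu'w.symm⟩
  rintro rfl
  exact hu't hu'w

theorem card_attached_add_one (hG : UniquelySaturated diamond G) (hT : G.cliqueSet 3 = {T})
    (hB : (G.detached T).Nonempty) (ht : t ∈ T) (ht' : t' ∈ T) (htt' : t ≠ t') :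
    #(G.attached T t') + 1 = #(G.attached T t) := by
  -- Count the paths `u - w - u'` through detached `w`, first with `u ∈ A t` and `u' ∈ A t'`,
  -- then with `u ≠ u'` both in `A t`.
  set A := G.attached T t
  set A' := G.attached T t'
  have hcross : #(G.detached T) * (2 * 2) = #(A ×ˢ A') * 2 :=
    card_mul_eq_card_mul (fun w (p : V × V) => G.Adj w p.1 ∧ G.Adj w p.2)
      (fun w hw => by
        rw [bipartiteAbove, filter_product (G.Adj w) (G.Adj w), card_product,
          hG.card_filter_attached_adj hT hw ht, hG.card_filter_attached_adj hT hw ht'])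
      (fun p hp => hG.card_filter_detached_adj_adj_of_attached_of_attached hT ht ht' htt'
        (mem_product.mp hp).1 (mem_product.mp hp).2)
  have hsame : #(G.detached T) * 2 = #A.offDiag * 1 :=
    card_mul_eq_card_mul (fun w (p : V × V) => G.Adj w p.1 ∧ G.Adj w p.2)
      (fun w hw => by
        have : {p ∈ A.offDiag | G.Adj w p.1 ∧ G.Adj w p.2} = {x ∈ A | G.Adj w x}.offDiag := by
          ext; simp only [mem_filter, mem_offDiag]; tauto
        rw [bipartiteAbove, this, offDiag_card, hG.card_filter_attached_adj hT hw ht])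
      (fun p hp => hG.card_filter_detached_adj_adj_of_attached hT ht (mem_offDiag.mp hp).1
        (mem_offDiag.mp hp).2.1 (mem_offDiag.mp hp).2.2)
  have hA : 0 < #A := by
    obtain ⟨w, hw⟩ := hB
    have := card_le_card (filter_subset (G.Adj w) A)
    rw [hG.card_filter_attached_adj hT hw ht] at this
    omega
  rw [card_product] at hcross
  rw [offDiag_card] at hsame
  have : #A * #A' = #A * (#A - 1) := by rw [Nat.mul_sub_one]; omega
  have := Nat.eq_of_mul_eq_mul_left hA this
  omega

theorem detached_eq_empty (hG : UniquelySaturated diamond G) (hT : G.cliqueSet 3 = {T}) :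
    G.detached T = ∅ := by
  by_contra hB
  have hcard := (isNClique_of_cliqueSet_eq hT).2
  obtain ⟨t, ht, t', ht', htt'⟩ := one_lt_card.mp (by omega : 1 < #T)
  have := hG.card_attached_add_one hT (nonempty_iff_ne_empty.mpr hB) ht ht' htt'
  have := hG.card_attached_add_one hT (nonempty_iff_ne_empty.mpr hB) ht' ht htt'.symm
  omega

theorem exists_forall_adj_iff_eq (hG : UniquelySaturated diamond G) (hT : G.cliqueSet 3 = {T})
    (hu : u ∉ T) : ∃ t ∈ T, ∀ w, G.Adj u w ↔ w = t := by
  have hB := hG.detached_eq_empty hT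
  have hu' : ¬ G.IsDetached T u := fun h => by simpa [hB] using mem_detached.mpr h
  obtain ⟨t, ht, hut⟩ : ∃ t ∈ T, G.Adj u t := by simpa [IsDetached, hu] using hu'
  refine ⟨t, ht, fun w => ⟨fun huw => by_contra fun hwt => ?_, by rintro rfl; exact hut⟩⟩
  simpa [hB] using mem_detached.mpr (hG.isDetached_of_adj_of_adj hT hu ht hut huw hwt)

theorem eq_of_notMem_of_notMem (hG : UniquelySaturated diamond G) (hT : G.cliqueSet 3 = {T})
    (hu : u ∉ T) (hu' : u' ∉ T) : u = u' := by
  by_contra huu'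
  obtain ⟨t, ht, hN⟩ := hG.exists_forall_adj_iff_eq hT hu
  have hadj : ¬ G.Adj u u' := fun h => hu' ((hN u').mp h ▸ ht)
  obtain ⟨x, y, hxy, hxyN⟩ :=
    hG.exists_commonNeighbors_eq_pair_of_notMem hT huu' hadj hu (Or.inl hu')
  have hx := ((adj_and_adj_iff_of_commonNeighbors_eq_pair hxyN).mpr (Or.inl rfl)).1
  have hy := ((adj_and_adj_iff_of_commonNeighbors_eq_pair hxyN).mpr (Or.inr rfl)).1
  exact hxy (((hN x).mp hx).trans ((hN y).mp hy).symm)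

end UniquelySaturated

end Counting

theorem nonempty_iso_C3star_of_adj {a b c d : V} (hab : G.Adj a b) (hac : G.Adj a c)
    (hbc : G.Adj b c) (hdc : G.Adj d c) (hda : ¬ G.Adj d a) (hdb : ¬ G.Adj d b)
    (hV : ∀ x, x = a ∨ x = b ∨ x = c ∨ x = d) : Nonempty (G ≃g C3star) := by
  have had : a ≠ d := by rintro rfl; exact hdb hab
  have hbd : b ≠ d := by rintro rfl; exact hda hab.symm
  have hinj : Function.Injective ![a, b, c, d] := by
    rw [← List.nodup_ofFn]
    simp [hab.ne, hac.ne, hbc.ne, hdc.ne', had, hbd]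
  have hsurj : Function.Surjective ![a, b, c, d] := fun x => by
    rcases hV x with rfl | rfl | rfl | rfl
    exacts [⟨0, rfl⟩, ⟨1, rfl⟩, ⟨2, rfl⟩, ⟨3, rfl⟩]
  refine ⟨(RelIso.mk (Equiv.ofBijective _ ⟨hinj, hsurj⟩) fun {i j} => ?_ :
    C3star ≃g G).symm⟩
  change G.Adj (![a, b, c, d] i) (![a, b, c, d] j) ↔ C3star.Adj i j
  have had' : ¬ G.Adj a d := fun h => hda h.symm
  have hbd' : ¬ G.Adj b d := fun h => hdb h.symm
  fin_cases i <;> fin_cases j <;> simp +decide [hab, hac, hbc, hdc, hda, hdb, hab.symm, hac.symm,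
    hbc.symm, hdc.symm, had', hbd']

theorem nonempty_iso_C3star [Fintype V] (hcard : 4 ≤ Fintype.card V)
    (hG : UniquelySaturated diamond G) (htri : (G.cliqueSet 3).ncard = 1) :
    Nonempty (G ≃g C3star) := by
  classical
  obtain ⟨T, hT⟩ := Set.ncard_eq_one.mp htri
  obtain ⟨a, b, c, hab, hac, hbc, rfl⟩ := is3Clique_iff.mp (isNClique_of_cliqueSet_eq hT)
  obtain ⟨d, -, hd⟩ := exists_mem_notMem_of_card_lt_card (s := {a, b, c}) (t := univ)
    (by have := card_le_three (a := a) (b := b) (c := c); rw [card_univ]; omega)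
  have hV x : x = a ∨ x = b ∨ x = c ∨ x = d := by
    by_cases hx : x ∈ ({a, b, c} : Finset V)
    · simp only [mem_insert, mem_singleton] at hx
      tauto
    · exact Or.inr (Or.inr (Or.inr (hG.eq_of_notMem_of_notMem hT hx hd)))
  obtain ⟨t, ht, hdN⟩ := hG.exists_forall_adj_iff_eq hT hd
  have hdt := (hdN t).mpr rfl
  have hnd s (hst : s ≠ t) : ¬ G.Adj d s := fun h => hst ((hdN s).mp h)
  simp only [mem_insert, mem_singleton] at ht
  rcases ht with rfl | rfl | rfl
  · exact nonempty_iso_C3star_of_adj hbc hab.symm hac.symm hdt (hnd _ hab.ne') (hnd _ hac.ne')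
      (fun x => by have := hV x; tauto)
  · exact nonempty_iso_C3star_of_adj hac hab hbc.symm hdt (hnd _ hab.ne) (hnd _ hbc.ne')
      (fun x => by have := hV x; tauto)
  · exact nonempty_iso_C3star_of_adj hab hac hbc hdt (hnd _ hac.ne) (hnd _ hbc.ne) hV

theorem diamond_free_C3star : diamond.Free C3star := fun ⟨f⟩ =>
  absurd (Fintype.card_le_of_embedding f.mapEdgeSet) (by decide)

theorem C3star_sup_edge_adj_swap : ∀ u v : Fin 4, u ≠ v → ¬ C3star.Adj u v → ∀ i j,
    (C3star ⊔ fromEdgeSet {s(u, v)}).Adj (Equiv.swap u v i) (Equiv.swap u v j) ↔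
      diamond.Adj i j := by
  decide

theorem uniquelySaturated_diamond_C3star : UniquelySaturated diamond C3star :=
  ⟨forall_not_isCopy_iff_free.mpr diamond_free_C3star, fun u v huv hadj =>
    existsUnique_isCopy_of_iso
      (RelIso.symm ⟨Equiv.swap u v, C3star_sup_edge_adj_swap u v huv hadj _ _⟩)⟩

theorem C3star_cliqueSet_three : C3star.cliqueSet 3 = {{0, 1, 2}} := by
  ext T
  rw [mem_cliqueSet_iff, Set.mem_singleton_iff]
  revert T
  decide

end SimpleGraph

theorem stmt12 :
    (UniquelySaturated diamond C3star ∧ (C3star.cliqueSet 3).ncard = 1) ∧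
      ∀ (V : Type) [Fintype V] (G : SimpleGraph V), 4 ≤ Fintype.card V →
        UniquelySaturated diamond G → (G.cliqueSet 3).ncard = 1 →
          Nonempty (G ≃g C3star) :=
  ⟨⟨uniquelySaturated_diamond_C3star, by rw [C3star_cliqueSet_three, Set.ncard_singleton]⟩,
    fun _ _ _ hcard hG htri => nonempty_iso_C3star hcard hG htri⟩
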